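/- Let (X,T) be the Bratteli-Vershik system of the following ordered Bratteli diagram: for each n >= 1, level n has q_n >= 2 vertices enumerated v(n,1), ..., v(n,q_n); there is exactly one edge from the root to each vertex of level 1, and exactly one edge from every vertex at level n to every vertex at level n+1; and the edges into each vertex at level n+1 are ordered according to the index i of their source v(n,i). This diagram is simple and properly ordered, and the system (X,T) satisfies: for every k >= 1 there exists a depth k pair of paths with a (k+1) cut, while no depth k pair of paths has a (k+2) cut; in particular (X,T) is untimed but not very untimed. -/

import Mathlib

set_option autoImplicit false

/-- An ordered Bratteli diagram: finite nonempty vertex sets `V n`, a single root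
vertex at level `0`, finite edge sets `E n` (edges from level `n` to level `n+1`,
multiple edges allowed), every vertex has an outgoing edge, every non-root vertex
an incoming edge, and the edges into each vertex carry a linear order, encoded by
the relation `elt` which relates only edges with the same target. -/
structure BDiagram where
  V : ℕ → Type
  E : ℕ → Type
  fintV : ∀ n, Fintype (V n)
  fintE : ∀ n, Fintype (E n)
  nonV : ∀ n, Nonempty (V n)
  rootSubsingleton : Subsingleton (V 0)
  src : ∀ {n}, E n → V n
  tgt : ∀ {n}, E n → V (n + 1)
  hasOut : ∀ (n : ℕ) (v : V n), ∃ e : E n, src e = v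
  hasIn : ∀ (n : ℕ) (v : V (n + 1)), ∃ e : E n, tgt e = v
  elt : ∀ {n}, E n → E n → Prop
  elt_tgt : ∀ (n : ℕ) (e f : E n), elt e f → tgt e = tgt f
  elt_irrefl : ∀ (n : ℕ) (e : E n), ¬ elt e e
  elt_trans : ∀ (n : ℕ) (e f g : E n), elt e f → elt f g → elt e g
  elt_total : ∀ (n : ℕ) (e f : E n), tgt e = tgt f → e ≠ f → elt e f ∨ elt f e

namespace BDiagram

variable (B : BDiagram)

def castV {m n : ℕ} (h : m = n) (v : B.V m) : B.V n := h ▸ v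

/-- An edge is minimal if no edge (into the same target) is below it. -/
def IsMinEdge {n : ℕ} (e : B.E n) : Prop := ∀ e' : B.E n, ¬ B.elt e' e

/-- An edge is maximal if no edge (into the same target) is above it. -/
def IsMaxEdge {n : ℕ} (e : B.E n) : Prop := ∀ e' : B.E n, ¬ B.elt e e'

/-- The space of infinite paths from the root. -/
def PathSpace : Type := { x : ∀ n, B.E n // ∀ n, B.tgt (x n) = B.src (x (n + 1)) }

def IsMinPath (x : B.PathSpace) : Prop := ∀ n, B.IsMinEdge (x.1 n)

def IsMaxPath (x : B.PathSpace) : Prop := ∀ n, B.IsMaxEdge (x.1 n)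

/-- Properly ordered: unique minimal and unique maximal path. -/
def ProperlyOrdered : Prop :=
  (∃! x : B.PathSpace, B.IsMinPath x) ∧ (∃! x : B.PathSpace, B.IsMaxPath x)

/-- The partial order on cofinal paths: `x < y` iff they eventually agree and at the
last disagreement the edge of `x` is below the edge of `y`. -/
def pathLT (x y : B.PathSpace) : Prop :=
  ∃ N : ℕ, B.elt (x.1 N) (y.1 N) ∧ ∀ n : ℕ, N < n → x.1 n = y.1 n

/-- `T` is the Vershik map: each non-maximal path goes to its successor, and each
maximal path goes to a minimal path. -/
def IsVershik (T : B.PathSpace ≃ B.PathSpace) : Prop :=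
  (∀ x : B.PathSpace, ¬ B.IsMaxPath x →
    B.pathLT x (T x) ∧ ∀ z : B.PathSpace, B.pathLT x z → ¬ B.pathLT z (T x)) ∧
  (∀ x : B.PathSpace, B.IsMaxPath x → B.IsMinPath (T x))

/-- `f` is a chain of consecutive edges on levels `[a, b)`. -/
def SegOn (f : ∀ i, B.E i) (a b : ℕ) : Prop :=
  ∀ i : ℕ, a ≤ i → i + 1 < b → B.tgt (f i) = B.src (f (i + 1))

/-- Simplicity: some telescoping has complete connections between adjacent levels. -/
def Simple : Prop :=
  ∃ ns : ℕ → ℕ, StrictMono ns ∧ ns 0 = 0 ∧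
    ∀ (l c : ℕ), ns (l + 1) = c + 1 →
      ∀ (v : B.V (ns l)) (w : B.V (c + 1)),
        ∃ f : ∀ i, B.E i, B.SegOn f (ns l) (c + 1) ∧ B.src (f (ns l)) = v ∧ B.tgt (f c) = w

/-- The natural (Cantor) topology on the path space, induced from the product of
the discrete topologies on the edge sets. -/
def pathTop : TopologicalSpace B.PathSpace :=
  TopologicalSpace.induced Subtype.val (@Pi.topologicalSpace ℕ B.E (fun _ => ⊥))

/-- Integer iterates of a bijection of the path space. -/
def iterZ (T : B.PathSpace ≃ B.PathSpace) (m : ℤ) : B.PathSpace ≃ B.PathSpace :=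
  (T : Equiv.Perm B.PathSpace) ^ m

/-- Two paths have the same `k`-coding: for every time `m` the initial segments of
`T^m x` and `T^m y` from the root to level `k` coincide. -/
def SameCoding (T : B.PathSpace ≃ B.PathSpace) (k : ℕ) (x y : B.PathSpace) : Prop :=
  ∀ (m : ℤ) (i : ℕ), i < k → ((B.iterZ T m) x).1 i = ((B.iterZ T m) y).1 i

/-- A depth `k` pair: distinct paths with the same `k`-coding but not the same
`(k+1)`-coding. -/
def DepthPair (T : B.PathSpace ≃ B.PathSpace) (k : ℕ) (x y : B.PathSpace) : Prop :=
  x ≠ y ∧ B.SameCoding T k x y ∧ ¬ B.SameCoding T (k + 1) x y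

/-- The pair `x, y` has a `j` cut: for some time `m`, both `T^m x` and `T^m y` are
minimal from the root into level `j`. -/
def HasCut (T : B.PathSpace ≃ B.PathSpace) (j : ℕ) (x y : B.PathSpace) : Prop :=
  ∃ m : ℤ, (∀ i : ℕ, i < j → B.IsMinEdge (((B.iterZ T m) x).1 i)) ∧
    (∀ i : ℕ, i < j → B.IsMinEdge (((B.iterZ T m) y).1 i))

/-- Nonexpansive: for every `k ≥ 1` there are two distinct paths with the same
`k`-coding. -/
def Nonexpansive (T : B.PathSpace ≃ B.PathSpace) : Prop :=
  ∀ k : ℕ, 1 ≤ k → ∃ x y : B.PathSpace, x ≠ y ∧ B.SameCoding T k x y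

/-- Well timed: for every `k ≥ 1` and every `j > k` there is a depth `k` pair with
a `j` cut. -/
def WellTimed (T : B.PathSpace ≃ B.PathSpace) : Prop :=
  ∀ k : ℕ, 1 ≤ k → ∀ j : ℕ, k < j →
    ∃ x y : B.PathSpace, B.DepthPair T k x y ∧ B.HasCut T j x y

/-- Very well timed: for every `k ≥ 1` there is a depth `k` pair having a `j` cut
for every `j > k`. -/
def VeryWellTimed (T : B.PathSpace ≃ B.PathSpace) : Prop :=
  ∀ k : ℕ, 1 ≤ k →
    ∃ x y : B.PathSpace, B.DepthPair T k x y ∧ ∀ j : ℕ, k < j → B.HasCut T j x y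

/-- Weakly well timed: for infinitely many `k ≥ 1`, for every `j > k` there is a
depth `k` pair with a `j` cut. -/
def WeaklyWellTimed (T : B.PathSpace ≃ B.PathSpace) : Prop :=
  ∀ K : ℕ, ∃ k : ℕ, K ≤ k ∧ 1 ≤ k ∧ ∀ j : ℕ, k < j →
    ∃ x y : B.PathSpace, B.DepthPair T k x y ∧ B.HasCut T j x y

/-- Untimed: for every `k ≥ 1` there is a `j > k` such that no depth `k` pair has a
`j` cut. -/
def Untimed (T : B.PathSpace ≃ B.PathSpace) : Prop :=
  ∀ k : ℕ, 1 ≤ k → ∃ j : ℕ, k < j ∧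
    ∀ x y : B.PathSpace, B.DepthPair T k x y → ¬ B.HasCut T j x y

/-- Very untimed: for every `k ≥ 1`, no depth `k` pair has a `(k+1)` cut. -/
def VeryUntimed (T : B.PathSpace ≃ B.PathSpace) : Prop :=
  ∀ k : ℕ, 1 ≤ k →
    ∀ x y : B.PathSpace, B.DepthPair T k x y → ¬ B.HasCut T (k + 1) x y

/-- Finite paths from the root to level `n`. -/
def FinPath (n : ℕ) : Type :=
  { f : (i : Fin n) → B.E i.val //
    ∀ (i : ℕ) (h : i + 1 < n), B.tgt (f ⟨i, by omega⟩) = B.src (f ⟨i + 1, h⟩) }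

/-- The lexicographic (from the end) order on finite paths to level `n` induced by
the orders on the edges. -/
def finLT {n : ℕ} (p q : B.FinPath n) : Prop :=
  ∃ (N : ℕ) (h : N < n), B.elt (p.1 ⟨N, h⟩) (q.1 ⟨N, h⟩) ∧
    ∀ (i : ℕ) (hi : i < n), N < i → p.1 ⟨i, hi⟩ = q.1 ⟨i, hi⟩

/-- The finite path `p` to level `n` ends at the vertex `v`. -/
def EndsAt {n : ℕ} (p : B.FinPath n) (v : B.V n) : Prop :=
  ∀ (m : ℕ) (h : n = m + 1), B.tgt (p.1 ⟨m, by omega⟩) = B.castV h v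

/-- The initial segment of an infinite path, from the root to level `n`. -/
def pathInit (x : B.PathSpace) (n : ℕ) : B.FinPath n :=
  ⟨fun i => x.1 i.val, fun i _ => x.2 i⟩

/-- The vertex of an infinite path at level `n`. -/
def pathVert (x : B.PathSpace) (n : ℕ) : B.V n := B.src (x.1 n)

theorem pathInit_endsAt (x : B.PathSpace) (n : ℕ) :
    B.EndsAt (B.pathInit x n) (B.pathVert x n) := by
  intro m h
  subst h
  exact x.2 m

/-- Truncation of a finite path to a lower level. -/
def truncTo {n : ℕ} (k : ℕ) (hk : k ≤ n) (p : B.FinPath n) : B.FinPath k :=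
  ⟨fun i => p.1 ⟨i.val, by omega⟩, fun i h => p.2 i (by omega)⟩

/-- Paths `x, x'` are `k`-equivalent at level `n`: there is an order isomorphism
between the sets of finite paths from the root into their level-`n` vertices which
preserves truncations to level `k` (equality of `k`-basic blocks) and which matches
the initial segment of `x` with the initial segment of `x'` (the "dot" is in the
same place). -/
def KEquivAt (k n : ℕ) (x x' : B.PathSpace) : Prop :=
  ∃ φ : { p : B.FinPath n // B.EndsAt p (B.pathVert x n) } ≃
      { p : B.FinPath n // B.EndsAt p (B.pathVert x' n) },
    (∀ p q, B.finLT p.1 q.1 ↔ B.finLT (φ p).1 (φ q).1) ∧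
    (∀ p (i : ℕ) (hik : i < k) (hin : i < n), ((φ p).1).1 ⟨i, hin⟩ = (p.1).1 ⟨i, hin⟩) ∧
    φ ⟨B.pathInit x n, B.pathInit_endsAt x n⟩ = ⟨B.pathInit x' n, B.pathInit_endsAt x' n⟩

/-- Paths are `k`-equivalent: they agree from the root to level `k` and are
`k`-equivalent at every level `n > k`. -/
def KEquivPaths (k : ℕ) (x x' : B.PathSpace) : Prop :=
  (∀ i : ℕ, i < k → x.1 i = x'.1 i) ∧ ∀ n : ℕ, k < n → B.KEquivAt k n x x'

/-- Standard nonexpansive: for every `k ≥ 1` there is a pair of distinct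
`k`-equivalent paths. -/
def SNE : Prop := ∀ k : ℕ, 1 ≤ k → ∃ x x' : B.PathSpace, x ≠ x' ∧ B.KEquivPaths k x x'

/-!  ### Telescoping  -/

theorem castV_eq_of_heq {m n : ℕ} (h : m = n) {v : B.V m} {w : B.V n} (hw : HEq v w) :
    B.castV h v = w := by
  subst h
  exact eq_of_heq hw

theorem castV_heq {m n : ℕ} (h : m = n) (v : B.V m) : HEq (B.castV h v) v := by
  subst h
  rfl

theorem castV_inj {m n : ℕ} (h : m = n) {v w : B.V m}
    (hvw : B.castV h v = B.castV h w) : v = w := by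
  subst h
  exact hvw

def castE {m n : ℕ} (h : m = n) (e : B.E m) : B.E n := h ▸ e

noncomputable def chainFrom (a : ℕ) (v : B.V a) : (i : ℕ) → B.E (a + i)
  | 0 => (B.hasOut a v).choose
  | i + 1 => (B.hasOut (a + i + 1) (B.tgt (chainFrom a v i))).choose

theorem chainFrom_src_zero (a : ℕ) (v : B.V a) : B.src (B.chainFrom a v 0) = v :=
  (B.hasOut a v).choose_spec

theorem chainFrom_src_succ (a : ℕ) (v : B.V a) (i : ℕ) :
    B.src (B.chainFrom a v (i + 1)) = B.tgt (B.chainFrom a v i) :=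
  (B.hasOut (a + i + 1) (B.tgt (B.chainFrom a v i))).choose_spec

noncomputable def chainTo (a : ℕ) : (j : ℕ) → (w : B.V (a + j + 1)) → (i : ℕ) → i ≤ j → B.E (a + i)
  | 0, w, i, _ => B.castE (by omega : a + 0 = a + i) (B.hasIn a w).choose
  | j + 1, w, i, _ =>
      if h : i ≤ j then chainTo a j (B.src (B.hasIn (a + j + 1) w).choose) i h
      else B.castE (by omega : a + (j + 1) = a + i) (B.hasIn (a + j + 1) w).choose

theorem chainTo_tgt_last (a : ℕ) : ∀ (j : ℕ) (w : B.V (a + j + 1)),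
    B.tgt (B.chainTo a j w j le_rfl) = w := by
  intro j w
  cases j with
  | zero =>
      simp only [chainTo]
      exact (B.hasIn a w).choose_spec
  | succ j =>
      simp only [chainTo]
      rw [dif_neg (by omega : ¬ j + 1 ≤ j)]
      exact (B.hasIn (a + j + 1) w).choose_spec

theorem chainTo_chain (a : ℕ) : ∀ (j : ℕ) (w : B.V (a + j + 1)) (i : ℕ) (h : i + 1 ≤ j)
    (h' : i ≤ j), B.tgt (B.chainTo a j w i h') = B.src (B.chainTo a j w (i + 1) h) := by
  intro j
  induction j with
  | zero => intro w i h h'; omega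
  | succ j ih =>
      intro w i h h'
      by_cases hij : i + 1 ≤ j
      · simp only [chainTo]
        rw [dif_pos (by omega : i ≤ j), dif_pos hij]
        exact ih _ i hij (by omega)
      · have hi : i = j := by omega
        subst hi
        simp only [chainTo]
        rw [dif_pos (le_refl i), dif_neg (by omega : ¬ i + 1 ≤ i)]
        exact B.chainTo_tgt_last a i _


def TelE (a b : ℕ) : Type :=
  { f : (i : Fin (b - a)) → B.E (a + i.val) //
    ∀ (i : ℕ) (h : i + 1 < b - a), B.tgt (f ⟨i, by omega⟩) = B.src (f ⟨i + 1, h⟩) }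

def telSrc {a b : ℕ} (hab : a < b) (f : B.TelE a b) : B.V a :=
  B.src (f.1 ⟨0, by omega⟩)

def telTgt {a b : ℕ} (hab : a < b) (f : B.TelE a b) : B.V b :=
  B.castV (by omega : a + (b - a - 1) + 1 = b) (B.tgt (f.1 ⟨b - a - 1, by omega⟩))

def telLT {a b : ℕ} (f g : B.TelE a b) : Prop :=
  ∃ (N : ℕ) (h : N < b - a), B.elt (f.1 ⟨N, h⟩) (g.1 ⟨N, h⟩) ∧
    ∀ (i : ℕ) (hi : i < b - a), N < i → f.1 ⟨i, hi⟩ = g.1 ⟨i, hi⟩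

noncomputable def Telescope (ns : ℕ → ℕ) (hmono : StrictMono ns) (h0 : ns 0 = 0) : BDiagram where
  V l := B.V (ns l)
  E l := B.TelE (ns l) (ns (l + 1))
  fintV l := B.fintV (ns l)
  fintE l := by
    classical
    letI : ∀ i : Fin (ns (l + 1) - ns l), Fintype (B.E (ns l + i.val)) := fun i => B.fintE _
    exact Subtype.fintype _
  nonV l := B.nonV (ns l)
  rootSubsingleton := by show Subsingleton (B.V (ns 0)); rw [h0]; exact B.rootSubsingleton
  src {l} f := B.telSrc (hmono (Nat.lt_succ_self l)) f
  tgt {l} f := B.telTgt (hmono (Nat.lt_succ_self l)) f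
  hasOut := by
    intro l v
    refine ⟨⟨fun i => B.chainFrom (ns l) v i.val,
      fun i h => (B.chainFrom_src_succ (ns l) v i).symm⟩, ?_⟩
    exact B.chainFrom_src_zero (ns l) v
  hasIn := by
    intro l w
    have hab : ns l < ns (l + 1) := hmono (Nat.lt_succ_self l)
    have hj : ns l + (ns (l + 1) - ns l - 1) + 1 = ns (l + 1) := by omega
    refine ⟨⟨fun i => B.chainTo (ns l) (ns (l + 1) - ns l - 1) (B.castV hj.symm w) i.val
        (by omega), fun i h => B.chainTo_chain _ _ _ i (by omega) (by omega)⟩, ?_⟩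
    show B.castV (by omega) (B.tgt (B.chainTo (ns l) (ns (l + 1) - ns l - 1)
      (B.castV hj.symm w) (ns (l + 1) - ns l - 1) (by omega))) = w
    rw [B.chainTo_tgt_last]
    exact B.castV_eq_of_heq _ (B.castV_heq _ w)
  elt {l} f g := B.telLT f g
  elt_tgt := by
    rintro l f g ⟨N, hN, hlt, hgt⟩
    show B.telTgt _ f = B.telTgt _ g
    unfold telTgt
    refine congrArg (B.castV _) ?_
    rcases eq_or_lt_of_le (show N ≤ ns (l + 1) - ns l - 1 by omega) with h | h
    · subst h
      exact B.elt_tgt _ _ _ hlt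
    · exact congrArg B.tgt (hgt _ (by omega) h)
  elt_irrefl := by
    rintro l f ⟨N, h, hlt, -⟩
    exact B.elt_irrefl _ _ hlt
  elt_trans := by
    rintro l f g h ⟨N₁, hN₁, hlt₁, hgt₁⟩ ⟨N₂, hN₂, hlt₂, hgt₂⟩
    rcases lt_trichotomy N₁ N₂ with hc | hc | hc
    · exact ⟨N₂, hN₂, by rw [hgt₁ N₂ hN₂ hc]; exact hlt₂,
        fun i hi hN => (hgt₁ i hi (by omega)).trans (hgt₂ i hi hN)⟩
    · subst hc
      exact ⟨N₁, hN₁, B.elt_trans _ _ _ _ hlt₁ hlt₂,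
        fun i hi hN => (hgt₁ i hi hN).trans (hgt₂ i hi hN)⟩
    · refine ⟨N₁, hN₁, ?_, fun i hi hN => (hgt₁ i hi hN).trans (hgt₂ i hi (by omega))⟩
      rw [← hgt₂ N₁ hN₁ hc]
      exact hlt₁
  elt_total := by
    intro l f g htgt hne
    classical
    have hab : ns l < ns (l + 1) := hmono (Nat.lt_succ_self l)
    set b := ns (l + 1) - ns l with hb
    have hex : ∃ N, ∃ h : N < b, f.1 ⟨N, h⟩ ≠ g.1 ⟨N, h⟩ := by
      by_contra hco
      push_neg at hco
      exact hne (Subtype.ext (funext fun i => hco i.val i.isLt))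
    set P : ℕ → Prop := fun N => ∃ h : N < b, f.1 ⟨N, h⟩ ≠ g.1 ⟨N, h⟩ with hP
    obtain ⟨N₀, hN₀⟩ := hex
    set N := Nat.findGreatest P b with hNdef
    have hPN : P N := Nat.findGreatest_spec (le_of_lt hN₀.choose) hN₀
    have hafter : ∀ i (hi : i < b), N < i → f.1 ⟨i, hi⟩ = g.1 ⟨i, hi⟩ := by
      intro i hi hNi
      by_contra hcon
      exact Nat.findGreatest_is_greatest hNi (le_of_lt hi) ⟨hi, hcon⟩
    clear_value N
    obtain ⟨hNb, hNne⟩ := hPN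
    have htgtN : B.tgt (f.1 ⟨N, hNb⟩) = B.tgt (g.1 ⟨N, hNb⟩) := by
      rcases eq_or_lt_of_le (show N ≤ b - 1 by omega) with h | h
      · -- N is the last index; use equality of targets of the composite edges
        subst h
        exact B.castV_inj _ htgt
      · have h2 : f.1 ⟨N + 1, by omega⟩ = g.1 ⟨N + 1, by omega⟩ :=
          hafter (N + 1) (by omega) (by omega)
        rw [f.2 N (by omega), g.2 N (by omega), h2]
    rcases B.elt_total _ _ _ htgtN hNne with h | h
    · exact Or.inl ⟨N, hNb, h, hafter⟩
    · exact Or.inr ⟨N, hNb, h, fun i hi hN => (hafter i hi hN).symm⟩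

def teleMap (ns : ℕ → ℕ) (hmono : StrictMono ns) (h0 : ns 0 = 0) (x : B.PathSpace) :
    (B.Telescope ns hmono h0).PathSpace :=
  ⟨fun l => ⟨fun i => x.1 (ns l + i.val), fun i _ => x.2 (ns l + i)⟩, fun l => by
    have hab : ns l < ns (l + 1) := hmono (Nat.lt_succ_self l)
    have hm : ns l + (ns (l + 1) - ns l - 1) + 1 = ns (l + 1) := by omega
    show B.castV _ (B.tgt (x.1 (ns l + (ns (l + 1) - ns l - 1)))) = B.src (x.1 (ns (l + 1) + 0))
    rw [x.2 (ns l + (ns (l + 1) - ns l - 1))]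
    exact B.castV_eq_of_heq _ (by rw [hm]; exact HEq.rfl)⟩


/-- Level `n+1` is uniformly ordered: there is a single nonempty block `P` of paths
from the root to level `n` such that the `n`-basic block at every vertex at level
`n+1` is a positive power of `P`. -/
def UniformlyOrderedLevel (n : ℕ) : Prop :=
  ∃ (p : ℕ) (hp : 0 < p) (P : Fin p → B.FinPath n),
    ∀ v : B.V (n + 1), ∃ (m : ℕ), 0 < m ∧
      ∃ enum : Fin (m * p) ≃ { q : B.FinPath (n + 1) // B.EndsAt q v },
        (∀ i j : Fin (m * p), i < j ↔ B.finLT (enum i).1 (enum j).1) ∧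
        (∀ i : Fin (m * p),
          B.truncTo n (Nat.le_succ n) (enum i).1 = P ⟨i.val % p, Nat.mod_lt _ hp⟩)

/-- The ordinal label of an edge: its position in the linear order on the edges
into its target. -/
noncomputable def edgeLabel {n : ℕ} (e : B.E n) : ℕ := Nat.card { e' : B.E n // B.elt e' e }

/-- Deterministic: for every `n ≥ 1`, distinct edges with the same source at level
`n` have different ordinal labels. -/
def Deterministic : Prop :=
  ∀ n : ℕ, 1 ≤ n → ∀ e f : B.E n, B.src e = B.src f → e ≠ f →
    B.edgeLabel e ≠ B.edgeLabel f

end BDiagram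

/-- A Bratteli–Vershik system: a simple, properly ordered ordered Bratteli diagram
together with its Vershik map. -/
structure BVSystem where
  B : BDiagram
  T : B.PathSpace ≃ B.PathSpace
  proper : B.ProperlyOrdered
  simple : B.Simple
  vershik : B.IsVershik T

/-- Conjugacy of systems: an equivariant homeomorphism of the path spaces taking
minimal paths to minimal paths. -/
def Conjugate (S S' : BVSystem) : Prop :=
  ∃ φ : S.B.PathSpace ≃ S'.B.PathSpace,
    (@Continuous _ _ S.B.pathTop S'.B.pathTop φ) ∧
    (@Continuous _ _ S'.B.pathTop S.B.pathTop φ.symm) ∧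
    (∀ x, φ (S.T x) = S'.T (φ x)) ∧
    (∀ x, S.B.IsMinPath x → S'.B.IsMinPath (φ x))

/-- An odometer: a system whose diagram has exactly one vertex at every level. -/
def IsOdometer (S : BVSystem) : Prop := ∀ n, Subsingleton (S.B.V n)

/-- Vertex sets of the example diagram: one root, and `q n ≥ 2` vertices at each
level `n ≥ 1`, enumerated by `Fin (q n)`. -/
def exV (q : ℕ → ℕ) : ℕ → Type
  | 0 => Fin 1
  | n + 1 => Fin (q (n + 1))

/-- The index of a vertex in its level's enumeration. -/
def exVIdx (q : ℕ → ℕ) : ∀ {n : ℕ}, exV q n → ℕ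
  | 0, v => v.val
  | _ + 1, v => v.val

theorem exVIdx_inj (q : ℕ → ℕ) : ∀ {n : ℕ} (v w : exV q n),
    exVIdx q v = exVIdx q w → v = w := by
  intro n v w h
  cases n <;> exact Fin.ext h

/-- The example diagram: exactly one edge from every vertex at each level to every
vertex at the next level, with the edges into each vertex ordered according to the
index of their source. -/
def exDiagram (q : ℕ → ℕ) (hq : ∀ n : ℕ, 1 ≤ n → 2 ≤ q n) : BDiagram where
  V := exV q
  E n := exV q n × exV q (n + 1)
  fintV n := by
    cases n with
    | zero => exact (inferInstance : Fintype (Fin 1))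
    | succ m => exact (inferInstance : Fintype (Fin (q (m + 1))))
  fintE n := by
    cases n with
    | zero => exact (inferInstance : Fintype (Fin 1 × Fin (q 1)))
    | succ m => exact (inferInstance : Fintype (Fin (q (m + 1)) × Fin (q (m + 2))))
  nonV n := by
    cases n with
    | zero => exact ⟨(0 : Fin 1)⟩
    | succ m => exact ⟨(⟨0, by have := hq (m + 1) (by omega); omega⟩ : Fin (q (m + 1)))⟩
  rootSubsingleton := ⟨fun a b => Fin.ext (by omega)⟩
  src e := e.1
  tgt e := e.2
  hasOut n v :=
    ⟨(v, (⟨0, by have := hq (n + 1) (by omega); omega⟩ : Fin (q (n + 1)))), rfl⟩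
  hasIn n v := by
    cases n with
    | zero => exact ⟨((0 : Fin 1), v), rfl⟩
    | succ m =>
        exact ⟨((⟨0, by have := hq (m + 1) (by omega); omega⟩ : Fin (q (m + 1))), v), rfl⟩
  elt e f := e.2 = f.2 ∧ exVIdx q e.1 < exVIdx q f.1
  elt_tgt := fun n e f h => h.1
  elt_irrefl := fun n e h => lt_irrefl _ h.2
  elt_trans := fun n e f g h1 h2 => ⟨h1.1.trans h2.1, h1.2.trans h2.2⟩
  elt_total := by
    intro n e f htgt hne
    have h1 : e.1 ≠ f.1 := by
      intro h
      exact hne (Prod.ext h htgt)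
    have h2 : exVIdx q e.1 ≠ exVIdx q f.1 := fun h => h1 (exVIdx_inj q _ _ h)
    rcases lt_or_gt_of_ne h2 with h | h
    · exact Or.inl ⟨htgt, h⟩
    · exact Or.inr ⟨htgt.symm, h⟩


/-!
The paths of `exDiagram q hq` are exactly the mixed-radix digit sequences `(d n)_{n ≥ 1}` with
`d n < q n` (`d n` is the index of the vertex at level `n`), and the Vershik map is the odometer:
it adds one to the lowest digit and carries. Hence the initial segment of `x` to level `k` is
encoded by the residue of `∑_{i < k} d (i+1) * Q i` modulo `Q k = q 1 ⋯ q k`, and `T` adds one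
to this residue. So `x, y` have the same `k`-coding iff their residues modulo `Q k` agree. A
`(j+1)` cut asks for a time at which both residues modulo `Q j` vanish, which also happens iff
they agree, so a `(j+1)` cut is the same as having the same `j`-coding. A depth `k` pair thus has a `(k+1)` cut but
never a `(k+2)` cut.
-/

namespace BDiagram

variable {B : BDiagram}

theorem iterZ_zero (T : B.PathSpace ≃ B.PathSpace) (x : B.PathSpace) : B.iterZ T 0 x = x := rfl

theorem iterZ_add_one (T : B.PathSpace ≃ B.PathSpace) (m : ℤ) (x : B.PathSpace) :
    B.iterZ T (m + 1) x = T (B.iterZ T m x) := by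
  rw [iterZ, add_comm, zpow_one_add, Equiv.Perm.mul_apply, iterZ]

theorem tgt_eq_tgt_of_succ_eq {x z : B.PathSpace} {N : ℕ} (h : x.1 (N + 1) = z.1 (N + 1)) :
    B.tgt (x.1 N) = B.tgt (z.1 N) := by
  rw [x.2 N, z.2 N, h]

theorem pathLT_or_pathLT {x z : B.PathSpace} (hne : x ≠ z) {M : ℕ}
    (hM : ∀ n, M < n → x.1 n = z.1 n) : B.pathLT x z ∨ B.pathLT z x := by
  classical
  have hex : ∃ N, ∀ n, N < n → x.1 n = z.1 n := ⟨M, hM⟩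
  have hN := Nat.find_spec hex
  have hdiff : x.1 (Nat.find hex) ≠ z.1 (Nat.find hex) := by
    intro heq
    have hge : ∀ n, Nat.find hex ≤ n → x.1 n = z.1 n := fun n hn =>
      (eq_or_lt_of_le hn).elim (· ▸ heq) (hN n)
    rcases hfind : Nat.find hex with _ | N
    · exact hne (Subtype.ext (funext fun n => hge n (hfind ▸ n.zero_le)))
    · exact Nat.find_min hex (show N < Nat.find hex by omega) fun n hn => hge n (by omega)
  rcases B.elt_total _ _ _ (tgt_eq_tgt_of_succ_eq (hN _ (Nat.lt_succ_self _))) hdiff with h | h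
  · exact Or.inl ⟨_, h, hN⟩
  · exact Or.inr ⟨_, h, fun n hn => (hN n hn).symm⟩

theorem IsVershik.apply_eq {T : B.PathSpace ≃ B.PathSpace} (hT : B.IsVershik T)
    {x s : B.PathSpace} (hx : ¬ B.IsMaxPath x) (hxs : B.pathLT x s)
    (hs : ∀ z, B.pathLT x z → ¬ B.pathLT z s) : T x = s := by
  obtain ⟨hxT, hTs⟩ := hT.1 x hx
  by_contra hne
  obtain ⟨N, -, hN⟩ := id hxT
  obtain ⟨N', -, hN'⟩ := id hxs
  rcases pathLT_or_pathLT hne (M := max N N')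
    (fun n hn => (hN n (by omega)).symm.trans (hN' n (by omega))) with h | h
  · exact hs _ hxT h
  · exact hTs _ hxs h

end BDiagram

section MixedRadix

variable (q : ℕ → ℕ)

/-- Digits are indexed from `1`, like the levels of the diagram: `d (i + 1)` has radix
`q (i + 1)` and weight `mixedPlace q i`. -/
def mixedPlace (k : ℕ) : ℕ := ∏ i ∈ Finset.range k, q (i + 1)

def mixedValue (d : ℕ → ℕ) (k : ℕ) : ℕ := ∑ i ∈ Finset.range k, d (i + 1) * mixedPlace q i

/-- The odometer successor of `d` when the digits `1, …, m` of `d` are maximal and digit `m + 1`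
is not. -/
def incrDigits (d : ℕ → ℕ) (m : ℕ) : ℕ → ℕ := fun n =>
  if n ≤ m then 0 else if n = m + 1 then d n + 1 else d n

variable {q}

theorem mixedPlace_succ (k : ℕ) : mixedPlace q (k + 1) = mixedPlace q k * q (k + 1) :=
  Finset.prod_range_succ _ _

theorem mixedValue_succ (d : ℕ → ℕ) (k : ℕ) :
    mixedValue q d (k + 1) = mixedValue q d k + d (k + 1) * mixedPlace q k :=
  Finset.sum_range_succ _ _

theorem mixedValue_congr {d e : ℕ → ℕ} {k : ℕ} (h : ∀ i < k, d (i + 1) = e (i + 1)) :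
    mixedValue q d k = mixedValue q e k :=
  Finset.sum_congr rfl fun i hi => by rw [h i (Finset.mem_range.1 hi)]

theorem mixedValue_lt {d : ℕ → ℕ} {k : ℕ} (hd : ∀ i < k, d (i + 1) < q (i + 1)) :
    mixedValue q d k < mixedPlace q k := by
  induction k with
  | zero => simp [mixedValue, mixedPlace]
  | succ k ih =>
    rw [mixedValue_succ, mixedPlace_succ]
    have := ih fun i hi => hd i (by omega)
    have := hd k k.lt_succ_self
    nlinarith

theorem mixedValue_eq_iff {d e : ℕ → ℕ} {k : ℕ} (hd : ∀ i < k, d (i + 1) < q (i + 1))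
    (he : ∀ i < k, e (i + 1) < q (i + 1)) :
    mixedValue q d k = mixedValue q e k ↔ ∀ i < k, d (i + 1) = e (i + 1) := by
  refine ⟨fun h => ?_, mixedValue_congr⟩
  induction k with
  | zero => simp
  | succ k ih =>
    have hdk := mixedValue_lt fun i hi => hd i (Nat.lt_succ_of_lt hi)
    have hek := mixedValue_lt fun i hi => he i (Nat.lt_succ_of_lt hi)
    rw [mixedValue_succ, mixedValue_succ] at h
    have hpos : 0 < mixedPlace q k := by omega
    have hdigit : d (k + 1) = e (k + 1) := by
      have := congrArg (· / mixedPlace q k) h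
      simpa [Nat.add_mul_div_right _ _ hpos, Nat.div_eq_of_lt hdk, Nat.div_eq_of_lt hek] using this
    intro i hi
    rcases Nat.lt_succ_iff_lt_or_eq.1 hi with hi | rfl
    · exact ih (fun i hi => hd i (by omega)) (fun i hi => he i (by omega))
        (by rw [hdigit] at h; omega) i hi
    · exact hdigit

theorem mixedValue_eq_zero_iff {d : ℕ → ℕ} {k : ℕ} (hd : ∀ i < k, d (i + 1) < q (i + 1)) :
    mixedValue q d k = 0 ↔ ∀ i < k, d (i + 1) = 0 := by
  have hzero : mixedValue q (fun _ => 0) k = 0 := by simp [mixedValue]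
  have := mixedValue_eq_iff (e := fun _ => 0) hd fun i hi => (Nat.zero_le _).trans_lt (hd i hi)
  rwa [hzero] at this

theorem mixedValue_add_one {d : ℕ → ℕ} {k : ℕ} (hd : ∀ i < k, d (i + 1) + 1 = q (i + 1)) :
    mixedValue q d k + 1 = mixedPlace q k := by
  induction k with
  | zero => simp [mixedValue, mixedPlace]
  | succ k ih =>
    rw [mixedValue_succ, mixedPlace_succ, ← hd k k.lt_succ_self,
      ← ih fun i hi => hd i (Nat.lt_succ_of_lt hi)]
    ring

theorem mixedValue_lt_mixedValue {d e : ℕ → ℕ} {N : ℕ} (hd : ∀ i < N, d (i + 1) < q (i + 1))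
    (hlt : d (N + 1) < e (N + 1)) (hagree : ∀ i, N + 1 < i → d i = e i) {K : ℕ} (hK : N < K) :
    mixedValue q d K < mixedValue q e K := by
  induction K, hK using Nat.le_induction with
  | base =>
    rw [mixedValue_succ, mixedValue_succ]
    have := mixedValue_lt hd
    nlinarith
  | succ K hK ih =>
    rw [mixedValue_succ, mixedValue_succ, hagree (K + 1) (by omega)]
    omega

theorem incrDigits_of_le (d : ℕ → ℕ) {m n : ℕ} (h : n ≤ m) : incrDigits d m n = 0 := if_pos h

theorem incrDigits_succ_self (d : ℕ → ℕ) (m : ℕ) : incrDigits d m (m + 1) = d (m + 1) + 1 := by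
  simp [incrDigits]

theorem incrDigits_of_lt (d : ℕ → ℕ) {m n : ℕ} (h : m + 1 < n) : incrDigits d m n = d n := by
  unfold incrDigits
  rw [if_neg (by omega), if_neg (by omega)]

theorem mixedValue_incrDigits_of_le (d : ℕ → ℕ) {m k : ℕ} (hk : k ≤ m) :
    mixedValue q (incrDigits d m) k = 0 :=
  Finset.sum_eq_zero fun i hi => by
    rw [incrDigits_of_le d (by have := Finset.mem_range.1 hi; omega), zero_mul]

theorem mixedValue_incrDigits_of_lt {d : ℕ → ℕ} {m k : ℕ}
    (hmax : ∀ i < m, d (i + 1) + 1 = q (i + 1)) (hk : m < k) :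
    mixedValue q (incrDigits d m) k = mixedValue q d k + 1 := by
  induction k, hk using Nat.le_induction with
  | base =>
    rw [mixedValue_succ, mixedValue_succ, mixedValue_incrDigits_of_le d le_rfl,
      incrDigits_succ_self, ← mixedValue_add_one hmax]
    ring
  | succ k hk ih =>
    rw [mixedValue_succ, mixedValue_succ, ih, incrDigits_of_lt d (by omega)]
    ring

end MixedRadix

namespace exDiagram

variable {q : ℕ → ℕ} {hq : ∀ n : ℕ, 1 ≤ n → 2 ≤ q n}

theorem exVIdx_zero (v : exV q 0) : exVIdx q v = 0 :=
  Nat.lt_one_iff.1 (show (v : Fin 1).val < 1 from v.isLt)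

theorem exVIdx_succ_lt {n : ℕ} (v : exV q (n + 1)) : exVIdx q v < q (n + 1) :=
  (v : Fin (q (n + 1))).isLt

variable (hq) in
def vertex : (n : ℕ) → ℕ → exV q n
  | 0, _ => (0 : Fin 1)
  | n + 1, i => (⟨i % q (n + 1), Nat.mod_lt _ (by have := hq (n + 1) (by omega); omega)⟩ :
      Fin (q (n + 1)))

theorem exVIdx_vertex_zero (n : ℕ) : exVIdx q (vertex hq n 0) = 0 := by
  cases n <;> rfl

theorem exVIdx_vertex_succ (n i : ℕ) : exVIdx q (vertex hq (n + 1) i) = i % q (n + 1) := rfl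

def digit (x : (exDiagram q hq).PathSpace) (n : ℕ) : ℕ := exVIdx q (x.1 n).1

variable (q hq) in
def ofDigits (d : ℕ → ℕ) : (exDiagram q hq).PathSpace :=
  ⟨fun n => (vertex hq n (d n), vertex hq (n + 1) (d (n + 1))), fun _ => rfl⟩

theorem digit_ofDigits (d : ℕ → ℕ) (n : ℕ) :
    digit (ofDigits q hq d) (n + 1) = d (n + 1) % q (n + 1) := rfl

theorem digit_zero (x : (exDiagram q hq).PathSpace) : digit x 0 = 0 := exVIdx_zero _

theorem digit_succ (x : (exDiagram q hq).PathSpace) (n : ℕ) :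
    digit x (n + 1) = exVIdx q (x.1 n).2 :=
  congrArg (exVIdx q) (x.2 n).symm

theorem digit_succ_lt (x : (exDiagram q hq).PathSpace) (n : ℕ) : digit x (n + 1) < q (n + 1) :=
  exVIdx_succ_lt _

theorem edge_eq_iff {x y : (exDiagram q hq).PathSpace} {n : ℕ} :
    x.1 n = y.1 n ↔ digit x n = digit y n ∧ digit x (n + 1) = digit y (n + 1) := by
  refine ⟨fun h => ⟨by rw [digit, h, digit], by rw [digit_succ, h, digit_succ]⟩, fun ⟨h, h'⟩ => ?_⟩
  rw [digit_succ, digit_succ] at h'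
  exact Prod.ext (exVIdx_inj q _ _ h) (exVIdx_inj q _ _ h')

theorem ext_digit {x y : (exDiagram q hq).PathSpace} (h : ∀ n, digit x n = digit y n) : x = y :=
  Subtype.ext (funext fun n => edge_eq_iff.2 ⟨h n, h (n + 1)⟩)

theorem edges_eq_iff {x y : (exDiagram q hq).PathSpace} {k : ℕ} :
    (∀ i < k, x.1 i = y.1 i) ↔ ∀ i < k, digit x (i + 1) = digit y (i + 1) := by
  refine ⟨fun h i hi => (edge_eq_iff.1 (h i hi)).2, fun h i hi => edge_eq_iff.2 ⟨?_, h i hi⟩⟩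
  rcases i with _ | i
  · rw [digit_zero, digit_zero]
  · exact h i (by omega)

theorem isMinEdge_iff {n : ℕ} (e : (exDiagram q hq).E n) :
    (exDiagram q hq).IsMinEdge e ↔ exVIdx q e.1 = 0 := by
  refine ⟨fun he => ?_, fun he e' he' => by have := he'.2; omega⟩
  by_contra hne
  exact he (vertex hq n 0, e.2) ⟨rfl, by rw [exVIdx_vertex_zero]; omega⟩

theorem isMaxEdge_zero (e : (exDiagram q hq).E 0) : (exDiagram q hq).IsMaxEdge e := fun e' he' => by
  have := he'.2
  rw [exVIdx_zero, exVIdx_zero] at this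
  omega

theorem isMaxEdge_succ_iff {n : ℕ} (e : (exDiagram q hq).E (n + 1)) :
    (exDiagram q hq).IsMaxEdge e ↔ exVIdx q e.1 + 1 = q (n + 1) := by
  have hlt := exVIdx_succ_lt (q := q) e.1
  refine ⟨fun he => ?_, fun he e' he' => by have := he'.2; have := exVIdx_succ_lt e'.1; omega⟩
  by_contra hne
  refine he (vertex hq (n + 1) (q (n + 1) - 1), e.2) ⟨rfl, ?_⟩
  rw [exVIdx_vertex_succ, Nat.mod_eq_of_lt (by omega)]
  omega

theorem isMinPath_iff (x : (exDiagram q hq).PathSpace) :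
    (exDiagram q hq).IsMinPath x ↔ ∀ n, digit x n = 0 :=
  forall_congr' fun n => isMinEdge_iff (x.1 n)

theorem isMaxPath_iff (x : (exDiagram q hq).PathSpace) :
    (exDiagram q hq).IsMaxPath x ↔ ∀ n, digit x (n + 1) + 1 = q (n + 1) := by
  refine ⟨fun h n => (isMaxEdge_succ_iff _).1 (h (n + 1)), fun h n => ?_⟩
  rcases n with _ | n
  · exact isMaxEdge_zero _
  · exact (isMaxEdge_succ_iff _).2 (h n)

theorem pathLT_iff {x z : (exDiagram q hq).PathSpace} :
    (exDiagram q hq).pathLT x z ↔ ∃ N, digit x N < digit z N ∧ ∀ n, N < n → x.1 n = z.1 n :=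
  ⟨fun ⟨N, h, hup⟩ => ⟨N, h.2, hup⟩, fun ⟨N, h, hup⟩ =>
    ⟨N, ⟨BDiagram.tgt_eq_tgt_of_succ_eq (hup (N + 1) N.lt_succ_self), h⟩, hup⟩⟩

theorem simple : (exDiagram q hq).Simple := by
  classical
  refine ⟨id, strictMono_id, rfl, fun l c hlc v w => ?_⟩
  obtain rfl : l = c := Nat.succ_injective hlc
  refine ⟨Function.update (fun i => (vertex hq i 0, vertex hq (i + 1) 0)) l (v, w),
    fun i h h' => absurd h' (by simp only [id] at h; omega), ?_, ?_⟩
  · show (Function.update (β := fun i => exV q i × exV q (i + 1)) _ l (v, w) l).1 = v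
    rw [Function.update_self]
  · show (Function.update (β := fun i => exV q i × exV q (i + 1)) _ l (v, w) l).2 = w
    rw [Function.update_self]

theorem properlyOrdered : (exDiagram q hq).ProperlyOrdered := by
  have hmin : ∀ n, digit (ofDigits q hq 0) n = 0
    | 0 => digit_zero _
    | n + 1 => Nat.zero_mod _
  have hmax : ∀ n, digit (ofDigits q hq fun n => q n - 1) (n + 1) + 1 = q (n + 1) := fun n => by
    have := hq (n + 1) (by omega)
    rw [digit_ofDigits, Nat.mod_eq_of_lt (by omega)]
    omega
  refine ⟨⟨_, (isMinPath_iff _).2 hmin, fun y hy => ext_digit fun n => ?_⟩,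
    ⟨_, (isMaxPath_iff _).2 hmax, fun y hy => ext_digit fun n => ?_⟩⟩
  · rw [(isMinPath_iff y).1 hy n, hmin]
  · rcases n with _ | n
    · rw [digit_zero, digit_zero]
    · have := (isMaxPath_iff y).1 hy n
      have := hmax n
      omega

theorem eventually_mixedValue_lt_of_pathLT {x z : (exDiagram q hq).PathSpace}
    (h : (exDiagram q hq).pathLT x z) :
    ∀ᶠ K in Filter.atTop, mixedValue q (digit x) K < mixedValue q (digit z) K := by
  obtain ⟨N, hlt, hup⟩ := pathLT_iff.1 h
  obtain ⟨M, rfl⟩ : ∃ M, N = M + 1 :=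
    Nat.exists_eq_succ_of_ne_zero fun h0 => by rw [h0, digit_zero, digit_zero] at hlt; omega
  exact Filter.eventually_atTop.2 ⟨M + 1, fun K hK => mixedValue_lt_mixedValue
    (fun i _ => digit_succ_lt x i) hlt (fun i hi => (edge_eq_iff.1 (hup i hi)).1) hK⟩

section Successor

variable {x : (exDiagram q hq).PathSpace} {m : ℕ}

theorem digit_ofDigits_incrDigits (hlt : digit x (m + 1) + 1 < q (m + 1)) (n : ℕ) :
    digit (ofDigits q hq (incrDigits (digit x) m)) (n + 1) = incrDigits (digit x) m (n + 1) := by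
  rw [digit_ofDigits, Nat.mod_eq_of_lt]
  rcases lt_trichotomy n m with h | rfl | h
  · rw [incrDigits_of_le _ (by omega)]
    exact (Nat.zero_le _).trans_lt (digit_succ_lt x n)
  · rwa [incrDigits_succ_self]
  · rw [incrDigits_of_lt _ (by omega)]
    exact digit_succ_lt x n

theorem pathLT_ofDigits_incrDigits (hlt : digit x (m + 1) + 1 < q (m + 1)) :
    (exDiagram q hq).pathLT x (ofDigits q hq (incrDigits (digit x) m)) := by
  have habove : ∀ n, m + 1 < n → digit (ofDigits q hq (incrDigits (digit x) m)) n = digit x n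
    | 0, h => by omega
    | n + 1, h => by rw [digit_ofDigits_incrDigits hlt, incrDigits_of_lt _ h]
  refine pathLT_iff.2 ⟨m + 1, ?_, fun n hn => edge_eq_iff.2 ⟨?_, ?_⟩⟩
  · rw [digit_ofDigits_incrDigits hlt, incrDigits_succ_self]
    omega
  · exact (habove n hn).symm
  · exact (habove (n + 1) (by omega)).symm

theorem apply_eq_ofDigits_incrDigits {T : (exDiagram q hq).PathSpace ≃ (exDiagram q hq).PathSpace}
    (hT : (exDiagram q hq).IsVershik T) (hmax : ∀ i < m, digit x (i + 1) + 1 = q (i + 1))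
    (hlt : digit x (m + 1) + 1 < q (m + 1)) :
    T x = ofDigits q hq (incrDigits (digit x) m) := by
  refine hT.apply_eq (fun h => ?_) (pathLT_ofDigits_incrDigits hlt) fun z hxz hzs => ?_
  · have := (isMaxPath_iff x).1 h m
    omega
  · obtain ⟨K, hxz, hzs, hK⟩ := ((eventually_mixedValue_lt_of_pathLT hxz).and
      ((eventually_mixedValue_lt_of_pathLT hzs).and (Filter.eventually_gt_atTop m))).exists
    rw [mixedValue_congr fun i _ => digit_ofDigits_incrDigits hlt i,
      mixedValue_incrDigits_of_lt hmax hK] at hzs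
    omega

end Successor

/-- The residue modulo `mixedPlace q k` encoding the initial segment of `x` to level `k`: its
rank among the finite paths into the vertex of `x` at level `k`. -/
def height (x : (exDiagram q hq).PathSpace) (k : ℕ) : ZMod (mixedPlace q k) :=
  mixedValue q (digit x) k

theorem height_eq_height_iff {x y : (exDiagram q hq).PathSpace} {k : ℕ} :
    height x k = height y k ↔ ∀ i < k, digit x (i + 1) = digit y (i + 1) := by
  have hx := fun i (_ : i < k) => digit_succ_lt x i
  have hy := fun i (_ : i < k) => digit_succ_lt y i
  rw [height, height, ZMod.natCast_eq_natCast_iff', Nat.mod_eq_of_lt (mixedValue_lt hx),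
    Nat.mod_eq_of_lt (mixedValue_lt hy), mixedValue_eq_iff hx hy]

theorem height_eq_zero_iff {x : (exDiagram q hq).PathSpace} {k : ℕ} :
    height x k = 0 ↔ ∀ i < k, digit x (i + 1) = 0 := by
  have hx := fun i (_ : i < k) => digit_succ_lt x i
  rw [height, ZMod.natCast_eq_zero_iff, ← mixedValue_eq_zero_iff hx]
  exact ⟨fun h => Nat.eq_zero_of_dvd_of_lt h (mixedValue_lt hx), fun h => h ▸ dvd_zero _⟩

theorem height_add_one_eq_zero {x : (exDiagram q hq).PathSpace} {k : ℕ}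
    (h : ∀ i < k, digit x (i + 1) + 1 = q (i + 1)) : height x k + 1 = 0 := by
  rw [height, ← Nat.cast_one, ← Nat.cast_add, mixedValue_add_one h, ZMod.natCast_self]

theorem isMinEdge_lt_succ_iff {x : (exDiagram q hq).PathSpace} {k : ℕ} :
    (∀ i < k + 1, (exDiagram q hq).IsMinEdge (x.1 i)) ↔ height x k = 0 := by
  rw [height_eq_zero_iff]
  refine ⟨fun h i hi => (isMinEdge_iff _).1 (h (i + 1) (by omega)), fun h i hi => ?_⟩
  rcases i with _ | i
  · exact (isMinEdge_iff _).2 (digit_zero x)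
  · exact (isMinEdge_iff _).2 (h i (by omega))

variable {T : (exDiagram q hq).PathSpace ≃ (exDiagram q hq).PathSpace}

theorem height_apply (hT : (exDiagram q hq).IsVershik T) (x : (exDiagram q hq).PathSpace)
    (k : ℕ) : height (T x) k = height x k + 1 := by
  by_cases hx : (exDiagram q hq).IsMaxPath x
  · rw [height_eq_zero_iff.2 fun i _ => (isMinPath_iff _).1 (hT.2 x hx) (i + 1),
      height_add_one_eq_zero fun i _ => (isMaxPath_iff x).1 hx i]
  classical
  have hex : ∃ m, digit x (m + 1) + 1 < q (m + 1) := by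
    by_contra! h
    exact hx ((isMaxPath_iff x).2 fun n => le_antisymm (digit_succ_lt x n) (h n))
  have hmax : ∀ i < Nat.find hex, digit x (i + 1) + 1 = q (i + 1) := fun i hi =>
    le_antisymm (digit_succ_lt x i) (not_lt.1 (Nat.find_min hex hi))
  rw [apply_eq_ofDigits_incrDigits hT hmax (Nat.find_spec hex), height,
    mixedValue_congr fun i _ => digit_ofDigits_incrDigits (Nat.find_spec hex) i]
  rcases le_or_gt k (Nat.find hex) with hk | hk
  · rw [mixedValue_incrDigits_of_le _ hk, Nat.cast_zero,
      height_add_one_eq_zero fun i hi => hmax i (by omega)]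
  · rw [mixedValue_incrDigits_of_lt hmax hk, Nat.cast_add, Nat.cast_one, height]

theorem height_iterZ (hT : (exDiagram q hq).IsVershik T) (x : (exDiagram q hq).PathSpace)
    (k : ℕ) (m : ℤ) : height ((exDiagram q hq).iterZ T m x) k = height x k + m := by
  induction m using Int.induction_on with
  | zero => simp [BDiagram.iterZ_zero]
  | succ i ih =>
    rw [BDiagram.iterZ_add_one, height_apply hT, ih]
    push_cast
    ring
  | pred i ih =>
    rw [← sub_add_cancel (-(i : ℤ)) 1, BDiagram.iterZ_add_one, height_apply hT] at ih
    push_cast at ih ⊢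
    linear_combination ih

theorem sameCoding_iff (hT : (exDiagram q hq).IsVershik T) {k : ℕ}
    {x y : (exDiagram q hq).PathSpace} :
    (exDiagram q hq).SameCoding T k x y ↔ ∀ i < k, digit x (i + 1) = digit y (i + 1) := by
  refine ⟨fun h => edges_eq_iff.1 (h 0), fun h m => edges_eq_iff.2 ?_⟩
  rw [← height_eq_height_iff, height_iterZ hT, height_iterZ hT, height_eq_height_iff.2 h]

theorem hasCut_succ_iff_sameCoding (hT : (exDiagram q hq).IsVershik T) {j : ℕ}
    {x y : (exDiagram q hq).PathSpace} :
    (exDiagram q hq).HasCut T (j + 1) x y ↔ (exDiagram q hq).SameCoding T j x y := by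
  rw [sameCoding_iff hT, ← height_eq_height_iff]
  constructor
  · rintro ⟨m, hx, hy⟩
    rw [isMinEdge_lt_succ_iff, height_iterZ hT] at hx hy
    exact add_right_cancel (hx.trans hy.symm)
  · intro h
    -- run both paths back to time `-height x j`, where both heights vanish
    refine ⟨-(mixedValue q (digit x) j : ℤ), ?_, ?_⟩ <;>
    rw [isMinEdge_lt_succ_iff, height_iterZ hT, Int.cast_neg, Int.cast_natCast, ← height, h,
      add_neg_cancel]

theorem exists_depthPair_hasCut (hT : (exDiagram q hq).IsVershik T) (k : ℕ) :
    ∃ x y : (exDiagram q hq).PathSpace,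
      (exDiagram q hq).DepthPair T k x y ∧ (exDiagram q hq).HasCut T (k + 1) x y := by
  set x := ofDigits q hq 0
  set y := ofDigits q hq fun n => if n = k + 1 then 1 else 0
  have hcode : (exDiagram q hq).SameCoding T k x y :=
    (sameCoding_iff hT).2 fun i hi => by simp [x, y, digit_ofDigits, show i ≠ k by omega]
  have hsep : ¬ (exDiagram q hq).SameCoding T (k + 1) x y := fun h => by
    have := (sameCoding_iff hT).1 h k k.lt_succ_self
    rw [digit_ofDigits, digit_ofDigits, if_pos rfl,
      Nat.mod_eq_of_lt (hq (k + 1) (by omega))] at this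
    simp at this
  exact ⟨x, y, ⟨fun h => hsep (by rw [h]; exact fun _ _ _ => rfl), hcode, hsep⟩,
    (hasCut_succ_iff_sameCoding hT).2 hcode⟩

theorem not_hasCut_of_depthPair (hT : (exDiagram q hq).IsVershik T) {k : ℕ}
    {x y : (exDiagram q hq).PathSpace} (h : (exDiagram q hq).DepthPair T k x y) :
    ¬ (exDiagram q hq).HasCut T (k + 2) x y :=
  fun hc => h.2.2 ((hasCut_succ_iff_sameCoding hT).1 hc)

end exDiagram

/-- The example diagram (one edge between any two vertices at
consecutive levels, `q n ≥ 2` vertices at each level `n ≥ 1`, edges into each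
vertex ordered by the index of the source) is simple and properly ordered, and its
Bratteli–Vershik system satisfies: for every `k ≥ 1` there is a depth `k` pair
with a `(k+1)` cut, while no depth `k` pair has a `(k+2)` cut; in particular the
system is untimed but not very untimed. -/
theorem exDiagram_untimed_not_veryUntimed
    (q : ℕ → ℕ) (hq : ∀ n : ℕ, 1 ≤ n → 2 ≤ q n)
    (T : (exDiagram q hq).PathSpace ≃ (exDiagram q hq).PathSpace)
    (hT : (exDiagram q hq).IsVershik T) :
    (exDiagram q hq).Simple ∧ (exDiagram q hq).ProperlyOrdered ∧
    (∀ k : ℕ, 1 ≤ k → ∃ x y : (exDiagram q hq).PathSpace,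
      (exDiagram q hq).DepthPair T k x y ∧ (exDiagram q hq).HasCut T (k + 1) x y) ∧
    (∀ k : ℕ, 1 ≤ k → ∀ x y : (exDiagram q hq).PathSpace,
      (exDiagram q hq).DepthPair T k x y → ¬ (exDiagram q hq).HasCut T (k + 2) x y) ∧
    (exDiagram q hq).Untimed T ∧ ¬ (exDiagram q hq).VeryUntimed T := by
  refine ⟨exDiagram.simple, exDiagram.properlyOrdered,
    fun k _ => exDiagram.exists_depthPair_hasCut hT k,
    fun k _ x y => exDiagram.not_hasCut_of_depthPair hT,
    fun k _ => ⟨k + 2, by omega, fun x y => exDiagram.not_hasCut_of_depthPair hT⟩, fun h => ?_⟩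
  obtain ⟨x, y, hxy, hcut⟩ := exDiagram.exists_depthPair_hasCut hT 1
  exact h 1 le_rfl x y hxy hcut
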